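/- arXiv:1511.08993 — 6 statements merged into one kernel-verified Lean document; each statement's English description precedes it below -/
import Mathlib

section
/- Let K be a nonempty closed subset of the Euclidean plane ℝ², let z ∈ ℝ² and ρ > 0, and suppose K is star-shaped with respect to every point of the open ball B(z,ρ), i.e. for every x with dist(x,z) < ρ and every y ∈ K the closed segment [x,y] is contained in K. Let z_b ≠ z_e be points of ℝ² such that the open segment between z_b and z_e is contained in the topological frontier of K. Then the affine line through z_b and z_e is disjoint from the open ball B(z,ρ); in particular the distance from z to this line is at least ρ. -/
open Metric

/-- If `x` lies in the kernel ball and `y ∈ K`, the open segment from `x` to `y`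
lies in the interior of `K`. -/
lemma aux_openSegment_subset_interior
    (K : Set (EuclideanSpace ℝ (Fin 2)))
    (z : EuclideanSpace ℝ (Fin 2)) (ρ : ℝ)
    (hstar : ∀ x, dist x z < ρ → ∀ y ∈ K, segment ℝ x y ⊆ K)
    (x : EuclideanSpace ℝ (Fin 2)) (hx : dist x z < ρ)
    (y : EuclideanSpace ℝ (Fin 2)) (hy : y ∈ K) :
    openSegment ℝ x y ⊆ interior K := by
  rintro p ⟨a, b, ha, hb, hab, rfl⟩
  set ε := ρ - dist x z with hε
  have hεpos : 0 < ε := by simp only [hε]; linarith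
  have hball : Metric.ball (a • x + b • y) (a * ε) ⊆ K := by
    intro q hq
    set x' := a⁻¹ • (q - b • y) with hx'
    have hq' : a • x' + b • y = q := by
      rw [hx', smul_smul, mul_inv_cancel₀ ha.ne', one_smul, sub_add_cancel]
    have h1 : a • (x' - x) = q - (a • x + b • y) := by
      rw [smul_sub, hx', smul_smul, mul_inv_cancel₀ ha.ne', one_smul]
      abel
    have h2 : a * ‖x' - x‖ = ‖q - (a • x + b • y)‖ := by
      rw [← h1, norm_smul, Real.norm_eq_abs, abs_of_pos ha]
    have hq2 : ‖q - (a • x + b • y)‖ < a * ε := by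
      rw [← dist_eq_norm]; exact mem_ball.mp hq
    have hdist : dist x' x < ε := by
      rw [dist_eq_norm]
      nlinarith [norm_nonneg (x' - x)]
    have hx'ball : dist x' z < ρ := by
      calc dist x' z ≤ dist x' x + dist x z := dist_triangle _ _ _
        _ < ε + dist x z := by linarith
        _ = ρ := by simp [hε]
    exact hstar x' hx'ball y hy ⟨a, b, ha.le, hb.le, hab, hq'⟩
  exact mem_interior_iff_mem_nhds.mpr
    (Filter.mem_of_superset (ball_mem_nhds _ (by positivity)) hball)

/-- The line through an edge of a star-shaped set does not intersect the kernel ball. -/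
theorem line_through_frontier_edge_disjoint_kernel_ball
    (K : Set (EuclideanSpace ℝ (Fin 2))) (hKne : K.Nonempty) (hKcl : IsClosed K)
    (z : EuclideanSpace ℝ (Fin 2)) (ρ : ℝ) (hρ : 0 < ρ)
    (hstar : ∀ x, dist x z < ρ → ∀ y ∈ K, segment ℝ x y ⊆ K)
    (zb ze : EuclideanSpace ℝ (Fin 2)) (hne : zb ≠ ze)
    (hseg : openSegment ℝ zb ze ⊆ frontier K) :
    Disjoint (affineSpan ℝ {zb, ze} : Set (EuclideanSpace ℝ (Fin 2))) (Metric.ball z ρ) ∧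
      ρ ≤ Metric.infDist z (affineSpan ℝ {zb, ze} : Set (EuclideanSpace ℝ (Fin 2))) := by
  -- the ball is contained in the interior of K
  have hsub : Metric.ball z ρ ⊆ interior K := by
    apply interior_maximal _ isOpen_ball
    intro x hx
    obtain ⟨y, hy⟩ := hKne
    exact hstar x (mem_ball.mp hx) y hy (left_mem_segment ℝ x y)
  have hfr : ∀ w ∈ frontier K, w ∈ K ∧ w ∉ interior K := fun w hw =>
    ⟨hKcl.frontier_subset hw, fun hi => hw.2 hi⟩
  -- the parametrized line
  set q : ℝ → EuclideanSpace ℝ (Fin 2) := fun t => t • (ze - zb) + zb with hqdef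
  have hq_seg : ∀ t : ℝ, 0 < t → t < 1 → q t ∈ openSegment ℝ zb ze := by
    intro t h0 h1
    exact ⟨1 - t, t, by linarith, h0, by ring, by simp only [hqdef]; module⟩
  have hdisj : Disjoint (affineSpan ℝ {zb, ze} : Set (EuclideanSpace ℝ (Fin 2)))
      (Metric.ball z ρ) := by
    rw [Set.disjoint_left]
    rintro p hp hpball
    -- write p = q s
    have hzb : zb ∈ affineSpan ℝ ({zb, ze} : Set (EuclideanSpace ℝ (Fin 2))) :=
      left_mem_affineSpan_pair ℝ zb ze
    have hdir : p -ᵥ zb ∈ (affineSpan ℝ ({zb, ze} : Set (EuclideanSpace ℝ (Fin 2)))).direction :=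
      AffineSubspace.vsub_mem_direction hp hzb
    rw [direction_affineSpan, mem_vectorSpan_pair_rev] at hdir
    obtain ⟨s, hs⟩ := hdir
    have hps : p = q s := by
      simp only [hqdef]
      have : s • (ze - zb) = p - zb := hs
      rw [this]; abel
    -- key contradiction lemma
    have key : ∀ lam u : ℝ, 0 < lam → lam < 1 → 0 < u → u < 1 →
        (1 - lam) * s + lam * u = 1 / 2 → False := by
      intro lam u hl0 hl1 hu0 hu1 heq
      have hm : q (1 / 2) ∈ openSegment ℝ (q s) (q u) := by
        refine ⟨1 - lam, lam, by linarith, hl0, by ring, ?_⟩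
        simp only [hqdef]
        rw [← heq]
        module
      have hint : q (1 / 2) ∈ interior K := by
        refine aux_openSegment_subset_interior K z ρ hstar (q s) ?_ (q u)
          ((hfr _ (hseg (hq_seg u hu0 hu1))).1) hm
        rw [← hps]; exact mem_ball.mp hpball
      exact (hfr _ (hseg (hq_seg (1 / 2) (by norm_num) (by norm_num)))).2 hint
    rcases lt_trichotomy s (1 / 2) with hlt | heq | hgt
    · refine key ((1 / 2 - s) / (3 / 4 - s)) (3 / 4) ?_ ?_ (by norm_num) (by norm_num) ?_
      · apply div_pos <;> linarith
      · rw [div_lt_one (by linarith)]; linarith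
      · have hd : (3 / 4 : ℝ) - s ≠ 0 := by linarith
        have hlam : (1 / 2 - s) / (3 / 4 - s) * (3 / 4 - s) = 1 / 2 - s :=
          div_mul_cancel₀ _ hd
        linear_combination hlam
    · -- p is on the open segment, hence on the frontier, but also in the interior
      have hpf : p ∈ frontier K := hseg (by rw [hps, heq]; exact hq_seg _ (by norm_num) (by norm_num))
      exact (hfr _ hpf).2 (hsub hpball)
    · refine key ((s - 1 / 2) / (s - 1 / 4)) (1 / 4) ?_ ?_ (by norm_num) (by norm_num) ?_
      · apply div_pos <;> linarith
      · rw [div_lt_one (by linarith)]; linarith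
      · have hd : s - (1 / 4 : ℝ) ≠ 0 := by linarith
        have hlam : (s - 1 / 2) / (s - 1 / 4) * (s - 1 / 4) = s - 1 / 2 :=
          div_mul_cancel₀ _ hd
        linear_combination -hlam
  refine ⟨hdisj, ?_⟩
  by_contra h
  push_neg at h
  obtain ⟨y, hy, hyd⟩ := (Metric.infDist_lt_iff ⟨zb, left_mem_affineSpan_pair ℝ zb ze⟩).mp h
  exact Set.disjoint_left.mp hdisj hy (mem_ball.mpr (by rwa [dist_comm]))
end

section
/- Let K be a nonempty closed subset of ℝ², let z ∈ ℝ² and ρ > 0, and suppose K is star-shaped with respect to every point of the open ball B(z,ρ), i.e. for every x with dist(x,z) < ρ and every y ∈ K the closed segment [x,y] is contained in K. Let z_b ≠ z_e be points such that the open segment between z_b and z_e is contained in the topological frontier of K. Then the two-dimensional Lebesgue measure of the triangle conv{z_b, z_e, z} (the convex hull of the three points) satisfies vol(conv{z_b, z_e, z}) ≥ (1/2) · dist(z_b, z_e) · ρ. -/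
/-!
If `x` lies in the ball and `y ∈ K`, every point of `[x, y)` is interior to `K`: it lies in the
image of the ball under a homothety centred at `y`, which is open and contained in `K`. Since
`[z_b, z_e]` lies in the frontier, the whole line through `z_b` and `z_e` therefore misses the
ball, so the triangle has base `dist z_b z_e` and height at least `ρ`. With `ω` the area form, the
triangle has area at least `|ω (z_b - z) (z_e - z)| / 2`, because the parallelogram spanned by its
edges at `z` is covered by the triangle and its point reflection through the midpoint of the base.
-/

open Metric MeasureTheory

section StarConvex

variable {E : Type*} [AddCommGroup E] [Module ℝ E] [TopologicalSpace E] [IsTopologicalAddGroup E]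
  [ContinuousSMul ℝ E]

theorem mem_interior_of_starConvex_of_mem_segment {U K : Set E}
    (hU : IsOpen U) (hstar : ∀ x ∈ U, StarConvex ℝ x K) {x y p : E} (hx : x ∈ U) (hy : y ∈ K)
    (hp : p ∈ segment ℝ x y) (hpy : p ≠ y) : p ∈ interior K := by
  obtain ⟨a, c, ha, hc, hac, rfl⟩ := hp
  have ha0 : a ≠ 0 := by
    rintro rfl
    obtain rfl : c = 1 := by linarith
    simp at hpy
  let f : E ≃ₜ E := (Homeomorph.smulOfNeZero a ha0).trans (Homeomorph.addRight (c • y))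
  refine mem_interior.2 ⟨f '' U, ?_, f.isOpenMap U hU, Set.mem_image_of_mem f hx⟩
  rintro _ ⟨x', hx', rfl⟩
  exact hstar x' hx' hy ha hc hac

theorem notMem_of_mem_affineSpan_pair_of_segment_subset_frontier {U K : Set E} (hU : IsOpen U)
    (hstar : ∀ x ∈ U, StarConvex ℝ x K) (hK : IsClosed K)
    {a b : E} (hab : a ≠ b) (hfr : segment ℝ a b ⊆ frontier K) {q : E}
    (hq : q ∈ line[ℝ, a, b]) : q ∉ U := by
  have hint : ∀ p ∈ segment ℝ a b, p ∉ interior K := fun p hp hpK =>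
    Set.disjoint_left.1 disjoint_interior_frontier hpK (hfr hp)
  have haK : a ∈ K := hK.frontier_subset (hfr (left_mem_segment ℝ a b))
  have hbK : b ∈ K := hK.frontier_subset (hfr (right_mem_segment ℝ a b))
  intro hqU
  rcases (collinear_insert_of_mem_affineSpan_pair hq).wbtw_or_wbtw_or_wbtw with h | h | h
  · exact hint a (left_mem_segment ℝ a b) <| mem_interior_of_starConvex_of_mem_segment hU hstar
      hqU hbK (mem_segment_iff_wbtw.2 h) hab
  · exact hint b (right_mem_segment ℝ a b) <| mem_interior_of_starConvex_of_mem_segment hU hstar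
      hqU haK (segment_symm ℝ a q ▸ mem_segment_iff_wbtw.2 h) hab.symm
  · have hUK : U ⊆ interior K := interior_maximal
      (fun x hx => (hstar x hx).segment_subset haK (left_mem_segment ℝ x a)) hU
    exact hint q (segment_symm ℝ b a ▸ mem_segment_iff_wbtw.2 h) (hUK hqU)

end StarConvex

section Triangle

variable {E : Type*} [AddCommGroup E] [Module ℝ E]

theorem add_smul_sub_add_smul_sub_mem_convexHull {s t : ℝ} (hs : 0 ≤ s) (ht : 0 ≤ t)
    (hst : s + t ≤ 1) (a b c : E) :
    c + s • (a - c) + t • (b - c) ∈ convexHull ℝ {a, b, c} := by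
  have hmem : ∀ i, ![a, b, c] i ∈ ({a, b, c} : Set E) := by
    intro i; fin_cases i <;> simp
  convert (convex_convexHull ℝ ({a, b, c} : Set E)).sum_mem (t := Finset.univ)
    (w := ![s, t, 1 - s - t]) (z := ![a, b, c]) ?_ ?_ ?_ using 1
  · simp only [Fin.sum_univ_three, Matrix.cons_val_zero, Matrix.cons_val_one,
      Matrix.cons_val_two, Matrix.head_cons, Matrix.tail_cons]
    module
  · intro i _; fin_cases i <;> simp <;> linarith
  · simp [Fin.sum_univ_three]
  · intro i _; exact subset_convexHull ℝ _ (hmem i)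

theorem image_add_parallelepiped_subset_convexHull_union (a b c : E) :
    (c + ·) '' parallelepiped ![a - c, b - c] ⊆
      convexHull ℝ {a, b, c} ∪
        AffineMap.homothety (midpoint ℝ a b) (-1 : ℝ) '' convexHull ℝ {a, b, c} := by
  rintro _ ⟨x, hx, rfl⟩
  obtain ⟨st, ⟨h0, h1⟩, rfl⟩ := (mem_parallelepiped_iff _ _).1 hx
  have hs0 := h0 0; have ht0 := h0 1; have hs1 := h1 0; have ht1 := h1 1
  simp only [Pi.zero_apply, Pi.one_apply] at hs0 ht0 hs1 ht1
  simp only [Fin.sum_univ_two, Matrix.cons_val_zero, Matrix.cons_val_one]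
  rcases le_total (st 0 + st 1) 1 with hst | hst
  · left
    simpa [add_assoc] using add_smul_sub_add_smul_sub_mem_convexHull hs0 ht0 hst a b c
  · right
    refine ⟨_, add_smul_sub_add_smul_sub_mem_convexHull (s := 1 - st 0) (t := 1 - st 1)
      (by linarith) (by linarith) (by linarith) a b c, ?_⟩
    rw [AffineMap.homothety_apply, midpoint_eq_smul_add, vsub_eq_sub, vadd_eq_add, invOf_eq_inv]
    module

end Triangle

theorem addHaar_parallelepiped_le_two_mul_convexHull {E : Type*} [NormedAddCommGroup E]
    [NormedSpace ℝ E] [MeasurableSpace E] [BorelSpace E] [FiniteDimensional ℝ E]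
    (μ : Measure E) [μ.IsAddHaarMeasure] (a b c : E) :
    μ (parallelepiped ![a - c, b - c]) ≤ 2 * μ (convexHull ℝ {a, b, c}) :=
  calc μ (parallelepiped ![a - c, b - c])
      = μ ((c + ·) '' parallelepiped ![a - c, b - c]) := by
        rw [Set.image_add_left, measure_preimage_add]
    _ ≤ μ (convexHull ℝ {a, b, c}) +
          μ (AffineMap.homothety (midpoint ℝ a b) (-1 : ℝ) '' convexHull ℝ {a, b, c}) :=
        (measure_mono (image_add_parallelepiped_subset_convexHull_union a b c)).trans
          (measure_union_le _ _)
    _ = 2 * μ (convexHull ℝ {a, b, c}) := by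
        rw [Measure.addHaar_image_homothety, abs_pow, abs_neg, abs_one, one_pow,
          ENNReal.ofReal_one, one_mul, two_mul]

namespace Orientation

variable {E : Type*} [NormedAddCommGroup E] [InnerProductSpace ℝ E] [Fact (Module.finrank ℝ E = 2)]
  (o : Orientation ℝ E (Fin 2))

local notation "ω" => o.areaForm

attribute [local instance] FiniteDimensional.of_fact_finrank_eq_two

theorem volume_parallelepiped_pair [MeasurableSpace E] [BorelSpace E] (u v : E) :
    volume (parallelepiped ![u, v]) = ENNReal.ofReal |ω u v| := by
  rw [← o.measure_eq_volume, AlternatingMap.measure_parallelepiped, areaForm_to_volumeForm]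

theorem abs_areaForm_div_two_le_volume_convexHull [MeasurableSpace E] [BorelSpace E]
    (a b c : E) :
    ENNReal.ofReal (|ω (a - c) (b - c)| / 2) ≤ volume (convexHull ℝ {a, b, c}) := by
  rw [ENNReal.ofReal_div_of_pos two_pos, ENNReal.ofReal_ofNat, ← o.volume_parallelepiped_pair]
  exact ENNReal.div_le_of_le_mul
    ((addHaar_parallelepiped_le_two_mul_convexHull _ a b c).trans_eq (mul_comm _ _))

theorem exists_norm_add_smul_mul_norm_eq_abs_areaForm (u w : E) :
    ∃ t : ℝ, ‖u + t • w‖ * ‖w‖ = |ω u w| := by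
  set t := -(inner ℝ u w / inner ℝ w w)
  have horth : inner ℝ (u + t • w) w = 0 := by
    rw [inner_add_left, real_inner_smul_left, neg_mul, div_mul_cancel_of_imp]
    · ring
    · intro h; simp [inner_self_eq_zero.1 h]
  have harea : ω (u + t • w) w = ω u w := by simp [areaForm_apply_self]
  refine ⟨t, ?_⟩
  have hsq := o.inner_sq_add_areaForm_sq (u + t • w) w
  rw [horth, harea] at hsq
  rw [← abs_of_nonneg (by positivity : 0 ≤ ‖u + t • w‖ * ‖w‖), ← sq_eq_sq_iff_abs_eq_abs]
  linear_combination -hsq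

end Orientation

theorem area_auxiliary_triangle_lower_bound_general
    (K : Set (EuclideanSpace ℝ (Fin 2))) (hKcl : IsClosed K)
    (z : EuclideanSpace ℝ (Fin 2)) (ρ : ℝ)
    (hstar : ∀ x, dist x z < ρ → ∀ y ∈ K, segment ℝ x y ⊆ K)
    (zb ze : EuclideanSpace ℝ (Fin 2)) (hne : zb ≠ ze)
    (hseg : openSegment ℝ zb ze ⊆ frontier K) :
    ENNReal.ofReal ((1 / 2) * dist zb ze * ρ) ≤
      volume (convexHull ℝ ({zb, ze, z} : Set (EuclideanSpace ℝ (Fin 2)))) := by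
  have : Fact (Module.finrank ℝ (EuclideanSpace ℝ (Fin 2)) = 2) := ⟨finrank_euclideanSpace_fin⟩
  let o := (EuclideanSpace.basisFun (Fin 2) ℝ).toBasis.orientation
  obtain ⟨t, ht⟩ := o.exists_norm_add_smul_mul_norm_eq_abs_areaForm (zb - z) (ze - zb)
  have hfar : ρ ≤ ‖zb - z + t • (ze - zb)‖ := by
    have hsegK : segment ℝ zb ze ⊆ frontier K := by
      rw [← closure_openSegment]
      exact closure_minimal hseg isClosed_frontier
    have hstar' : ∀ x ∈ ball z ρ, StarConvex ℝ x K := fun x hx =>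
      starConvex_iff_segment_subset.2 (hstar x hx)
    have := notMem_of_mem_affineSpan_pair_of_segment_subset_frontier isOpen_ball hstar' hKcl hne
      hsegK (AffineMap.lineMap_mem_affineSpan_pair t zb ze)
    rwa [mem_ball, not_lt, AffineMap.lineMap_apply_module', dist_eq_norm,
      add_sub_assoc, add_comm] at this
  have harea : o.areaForm (zb - z) (ze - zb) = o.areaForm (zb - z) (ze - z) := by
    rw [← sub_sub_sub_cancel_right ze zb z, map_sub, o.areaForm_apply_self, sub_zero]
  calc ENNReal.ofReal ((1 / 2) * dist zb ze * ρ)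
      ≤ ENNReal.ofReal (|o.areaForm (zb - z) (ze - z)| / 2) := by
        refine ENNReal.ofReal_le_ofReal ?_
        rw [← harea, ← ht, dist_comm, dist_eq_norm]
        linarith [mul_le_mul_of_nonneg_right hfar (norm_nonneg (ze - zb))]
    _ ≤ volume (convexHull ℝ {zb, ze, z}) := o.abs_areaForm_div_two_le_volume_convexHull zb ze z

/-- The auxiliary triangle over a frontier edge of a star-shaped set has area at least
`(1/2) · h_E · ρ`. -/
theorem area_auxiliary_triangle_lower_bound
    (K : Set (EuclideanSpace ℝ (Fin 2))) (hKne : K.Nonempty) (hKcl : IsClosed K)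
    (z : EuclideanSpace ℝ (Fin 2)) (ρ : ℝ) (hρ : 0 < ρ)
    (hstar : ∀ x, dist x z < ρ → ∀ y ∈ K, segment ℝ x y ⊆ K)
    (zb ze : EuclideanSpace ℝ (Fin 2)) (hne : zb ≠ ze)
    (hseg : openSegment ℝ zb ze ⊆ frontier K) :
    ENNReal.ofReal ((1 / 2) * dist zb ze * ρ) ≤
      volume (convexHull ℝ ({zb, ze, z} : Set (EuclideanSpace ℝ (Fin 2)))) :=
  area_auxiliary_triangle_lower_bound_general K hKcl z ρ hstar zb ze hne hseg
end

section
/- Let σ ≥ 1 and c ≥ 1 be real numbers, and let h > 0, ρ > 0. Let z, z_b, z_e ∈ ℝ² with z_b ≠ z_e, and suppose: (i) the distance from z to the affine line through z_b and z_e is at least ρ; (ii) the triangle T = conv{z, z_b, z_e} has diameter at most h; (iii) h ≤ c · dist(z_b, z_e); and (iv) h ≤ σ · ρ. Then there exists a point x ∈ T such that the closed ball centered at x with radius diam(T)/(3 c σ) is contained in T; i.e. the ratio of the diameter of T to its inradius is at most 3 c σ. -/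
/-!
Put `x` at the centroid of `T`, where every barycentric coordinate equals `1/3`. The linear part of
the coordinate attached to a vertex is bounded by (opposite side) / (2 area) ≤ diam T / (2 area),
and `2 area ≥ ρ · dist z_b z_e` because the height of `T` over `[z_b, z_e]` is at least `ρ`. So the
ball of radius `r` about the centroid stays in `T` once `3 r diam T ≤ ρ · dist z_b z_e`, and for
`r = diam T / (3 c σ)` this is `diam T ^ 2 ≤ h ^ 2 ≤ (c · dist z_b z_e) (σ ρ)`.
-/

open Metric

theorem AffineBasis.closedBall_subset_convexHull {ι V : Type*} [NormedAddCommGroup V]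
    [NormedSpace ℝ V] (B : AffineBasis ι ℝ V) {K r : ℝ} {x : V} (hK0 : 0 ≤ K)
    (hK : ∀ i u, |(B.coord i).linear u| ≤ K * ‖u‖) (hx : ∀ i, r * K ≤ B.coord i x) :
    closedBall x r ⊆ convexHull ℝ (Set.range B) := by
  intro y hy
  rw [B.convexHull_eq_nonneg_coord]
  intro i
  have hcoord : B.coord i y = B.coord i x + (B.coord i).linear (y - x) := by
    rw [← vsub_eq_sub y, (B.coord i).linearMap_vsub, vsub_eq_sub]
    ring
  have hbound : |(B.coord i).linear (y - x)| ≤ r * K :=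
    (hK i _).trans (by rw [mul_comm]; gcongr; exact mem_closedBall_iff_norm.mp hy)
  linarith [neg_abs_le ((B.coord i).linear (y - x)), hx i]

namespace Orientation

variable {V : Type*} [NormedAddCommGroup V] [InnerProductSpace ℝ V]
  [Fact (Module.finrank ℝ V = 2)] (o : Orientation ℝ V (Fin 2))

local notation "ω" => o.areaForm

theorem linearIndependent_of_areaForm_ne_zero {e m : V} (h : ω e m ≠ 0) :
    LinearIndependent ℝ ![e, m] := by
  refine LinearIndependent.pair_iff.mpr fun s t hst => ?_
  have hs := congrArg (fun v => ω v m) hst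
  have ht := congrArg (fun v => ω e v) hst
  simp only [map_add, map_smul, LinearMap.add_apply, LinearMap.smul_apply, smul_eq_mul,
    areaForm_apply_self, mul_zero, add_zero, zero_add, map_zero, LinearMap.zero_apply] at hs ht
  exact ⟨(mul_eq_zero.mp hs).resolve_right h, (mul_eq_zero.mp ht).resolve_right h⟩

theorem areaForm_mul_eq_of_apply_eq_zero {e m : V} (h : ω e m ≠ 0) {f : V →ₗ[ℝ] ℝ}
    (hf : f e = 0) (u : V) : ω e m * f u = f m * ω e u := by
  let b := basisOfLinearIndependentOfCardEqFinrank (o.linearIndependent_of_areaForm_ne_zero h)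
    (by simp [Fact.out (p := Module.finrank ℝ V = 2)])
  have key : ω e m • f = f m • ω e := by
    refine b.ext fun i => ?_
    fin_cases i <;> simp [b, hf, mul_comm]
  simpa using LinearMap.congr_fun key u

theorem abs_apply_mul_abs_areaForm_le {e m : V} {f : V →ₗ[ℝ] ℝ} (hfe : f e = 0) (hfm : f m = 1)
    (u : V) : |f u| * |ω e m| ≤ ‖e‖ * ‖u‖ := by
  by_cases h : ω e m = 0
  · rw [h, abs_zero, mul_zero]
    positivity
  · rw [← abs_mul, mul_comm, o.areaForm_mul_eq_of_apply_eq_zero h hfe, hfm, one_mul]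
    exact o.abs_areaForm_le e u

theorem areaForm_sub_sub_rotate (a b c : V) : ω (b - a) (c - a) = ω (c - b) (a - b) := by
  simp only [map_sub, LinearMap.sub_apply, areaForm_apply_self]
  rw [o.areaForm_swap c a, o.areaForm_swap c b, o.areaForm_swap b a]
  ring

theorem mul_dist_le_abs_areaForm_of_le_infDist {a b c : V} {ρ : ℝ}
    (h : ρ ≤ infDist c (affineSpan ℝ {a, b} : Set V)) : ρ * dist a b ≤ |ω (b - a) (c - a)| := by
  rcases eq_or_ne a b with rfl | hab
  · simp
  set e := b - a
  have he : e ≠ 0 := sub_ne_zero.mpr hab.symm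
  set q := AffineMap.lineMap a b (inner ℝ e (c - a) / ‖e‖ ^ 2) with hq_def
  have hq : q ∈ affineSpan ℝ {a, b} := AffineMap.lineMap_mem_affineSpan_pair _ a b
  have hcq : c - q = (c - a) - (inner ℝ e (c - a) / ‖e‖ ^ 2) • e := by
    rw [hq_def, AffineMap.lineMap_apply_module']; abel
  have horth : inner ℝ e (c - q) = 0 := by
    rw [hcq, inner_sub_right, inner_smul_right, real_inner_self_eq_norm_sq]
    field_simp
    ring
  have harea : ω e (c - a) = ω e (c - q) := by
    rw [hcq, map_sub (ω e) (c - a), map_smul, areaForm_apply_self, smul_zero, sub_zero]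
  calc ρ * dist a b ≤ dist c q * ‖e‖ := by
        rw [dist_comm, dist_eq_norm]
        exact mul_le_mul_of_nonneg_right (h.trans (infDist_le_dist_of_mem hq)) (norm_nonneg _)
    _ = |ω e (c - a)| := by
        rw [harea, o.abs_areaForm_of_orthogonal horth, dist_eq_norm, mul_comm]

theorem abs_linear_mul_abs_areaForm_le {f : V →ᵃ[ℝ] ℝ} {a b c : V} (ha : f a = 1) (hb : f b = 0)
    (hc : f c = 0) (u : V) : |f.linear u| * |ω (b - a) (c - a)| ≤ dist b c * ‖u‖ := by
  rw [o.areaForm_sub_sub_rotate, dist_comm, dist_eq_norm]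
  refine o.abs_apply_mul_abs_areaForm_le ?_ ?_ u
  · rw [← vsub_eq_sub, f.linearMap_vsub, hc, hb, vsub_self]
  · rw [← vsub_eq_sub, f.linearMap_vsub, ha, hb, vsub_eq_sub, sub_zero]

theorem abs_coord_linear_mul_abs_areaForm_le (B : AffineBasis (Fin 3) ℝ V) {d : ℝ}
    (hd : ∀ i j, dist (B i) (B j) ≤ d) (i : Fin 3) (u : V) :
    |(B.coord i).linear u| * |ω (B 1 - B 0) (B 2 - B 0)| ≤ d * ‖u‖ := by
  have hrot := o.areaForm_sub_sub_rotate (B 0) (B 1) (B 2)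
  have hrot' := o.areaForm_sub_sub_rotate (B 1) (B 2) (B 0)
  fin_cases i
  · exact (o.abs_linear_mul_abs_areaForm_le (by simp) (by simp) (by simp) u).trans
      (by gcongr; exact hd 1 2)
  · rw [hrot]
    exact (o.abs_linear_mul_abs_areaForm_le (by simp) (by simp) (by simp) u).trans
      (by gcongr; exact hd 2 0)
  · rw [hrot, hrot']
    exact (o.abs_linear_mul_abs_areaForm_le (by simp) (by simp) (by simp) u).trans
      (by gcongr; exact hd 0 1)

theorem closedBall_centroid_subset_convexHull (B : AffineBasis (Fin 3) ℝ V) {d r : ℝ}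
    (hd : ∀ i j, dist (B i) (B j) ≤ d) (hD : ω (B 1 - B 0) (B 2 - B 0) ≠ 0)
    (hr : 3 * r * d ≤ |ω (B 1 - B 0) (B 2 - B 0)|) :
    closedBall (Finset.univ.centroid ℝ B) r ⊆ convexHull ℝ (Set.range B) := by
  have hD' := abs_pos.mpr hD
  have hd0 : 0 ≤ d := (dist_self (B 0)).symm.le.trans (hd 0 0)
  refine B.closedBall_subset_convexHull (K := d / |ω (B 1 - B 0) (B 2 - B 0)|) (by positivity)
    (fun i u => ?_) (fun i => ?_)
  · rw [div_mul_eq_mul_div, le_div_iff₀ hD']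
    exact o.abs_coord_linear_mul_abs_areaForm_le B hd i u
  · rw [B.coord_apply_centroid (Finset.mem_univ i), Finset.card_univ, Fintype.card_fin,
      ← mul_div_assoc, div_le_iff₀ hD']
    push_cast
    linarith

end Orientation

theorem auxiliary_triangle_shape_regular_general
    (σ c : ℝ) (hσ : 1 ≤ σ) (hc : 1 ≤ c) (h ρ : ℝ) (hρ : 0 < ρ)
    (z zb ze : EuclideanSpace ℝ (Fin 2)) (hne : zb ≠ ze)
    (hdist : ρ ≤ Metric.infDist z (affineSpan ℝ {zb, ze} : Set (EuclideanSpace ℝ (Fin 2))))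
    (hdiam : Metric.diam (convexHull ℝ ({z, zb, ze} : Set (EuclideanSpace ℝ (Fin 2)))) ≤ h)
    (hE : h ≤ c * dist zb ze) (hσρ : h ≤ σ * ρ) :
    ∃ x ∈ convexHull ℝ ({z, zb, ze} : Set (EuclideanSpace ℝ (Fin 2))),
      Metric.closedBall x
        (Metric.diam (convexHull ℝ ({z, zb, ze} : Set (EuclideanSpace ℝ (Fin 2)))) /
          (3 * c * σ)) ⊆
        convexHull ℝ ({z, zb, ze} : Set (EuclideanSpace ℝ (Fin 2))) := by
  have : Fact (Module.finrank ℝ (EuclideanSpace ℝ (Fin 2)) = 2) := ⟨finrank_euclideanSpace_fin⟩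
  let o : Orientation ℝ (EuclideanSpace ℝ (Fin 2)) (Fin 2) :=
    (EuclideanSpace.basisFun (Fin 2) ℝ).toBasis.orientation
  have hz : z ∉ (affineSpan ℝ {zb, ze} : Set (EuclideanSpace ℝ (Fin 2))) := fun hmem => by
    linarith [infDist_zero_of_mem hmem]
  have hindep := affineIndependent_of_ne_of_mem_of_mem_of_notMem hne
    (left_mem_affineSpan_pair ℝ zb ze) (right_mem_affineSpan_pair ℝ zb ze) hz
  let B : AffineBasis (Fin 3) ℝ (EuclideanSpace ℝ (Fin 2)) :=
    ⟨![zb, ze, z], hindep, hindep.affineSpan_eq_top_iff_card_eq_finrank_add_one.mpr (by simp)⟩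
  have hrange : Set.range B = {z, zb, ze} := by
    change Set.range ![zb, ze, z] = _
    rw [Matrix.range_cons, Matrix.range_cons_cons_empty, Set.singleton_union, Set.pair_comm,
      Set.insert_comm]
  have harea : ρ * dist zb ze ≤ |o.areaForm (ze - zb) (z - zb)| :=
    o.mul_dist_le_abs_areaForm_of_le_infDist hdist
  have hD : 0 < |o.areaForm (ze - zb) (z - zb)| := (mul_pos hρ (dist_pos.mpr hne)).trans_le harea
  have hcσ : 0 < c * σ := by positivity
  rw [convexHull_diam, ← hrange] at hdiam ⊢
  refine ⟨_, interior_subset B.centroid_mem_interior_convexHull,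
    o.closedBall_centroid_subset_convexHull B (fun i j => dist_le_diam_of_mem
      (Set.finite_range B).isBounded (Set.mem_range_self i) (Set.mem_range_self j))
      (abs_pos.mp hD) ?_⟩
  calc 3 * (diam (Set.range B) / (3 * c * σ)) * diam (Set.range B)
        = diam (Set.range B) * diam (Set.range B) / (c * σ) := by field_simp
    _ ≤ c * dist zb ze * (σ * ρ) / (c * σ) := by
        gcongr
        exacts [hdiam.trans hE, hdiam.trans hσρ]
    _ = ρ * dist zb ze := by field_simp
    _ ≤ _ := harea

/-- Shape-regularity of the auxiliary triangle: its diameter-to-inradius ratio is at most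
`3 c σ`. -/
theorem auxiliary_triangle_shape_regular
    (σ c : ℝ) (hσ : 1 ≤ σ) (hc : 1 ≤ c) (h ρ : ℝ) (hh : 0 < h) (hρ : 0 < ρ)
    (z zb ze : EuclideanSpace ℝ (Fin 2)) (hne : zb ≠ ze)
    (hdist : ρ ≤ Metric.infDist z (affineSpan ℝ {zb, ze} : Set (EuclideanSpace ℝ (Fin 2))))
    (hdiam : Metric.diam (convexHull ℝ ({z, zb, ze} : Set (EuclideanSpace ℝ (Fin 2)))) ≤ h)
    (hE : h ≤ c * dist zb ze) (hσρ : h ≤ σ * ρ) :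
    ∃ x ∈ convexHull ℝ ({z, zb, ze} : Set (EuclideanSpace ℝ (Fin 2))),
      Metric.closedBall x
        (Metric.diam (convexHull ℝ ({z, zb, ze} : Set (EuclideanSpace ℝ (Fin 2)))) /
          (3 * c * σ)) ⊆
        convexHull ℝ ({z, zb, ze} : Set (EuclideanSpace ℝ (Fin 2))) :=
  auxiliary_triangle_shape_regular_general σ c hσ hc h ρ hρ z zb ze hne hdist hdiam hE hσρ
end

section
/- Let σ ≥ 1 and ρ > 0. Let z_b ≠ z_e and z_K be points of ℝ² such that the distance from z_K to the affine line through z_b and z_e is at least ρ, and dist(z_b, z_K) ≤ σ·ρ. Then sin(∠ z_K z_b z_e) ≥ 1/σ, and consequently the angle satisfies ∠ z_K z_b z_e ≥ arcsin(1/σ). -/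
open Metric EuclideanGeometry Real

/-!
The distance from `z_K` to the line through `z_b` and `z_e` equals `dist z_K z_b · sin ∠ z_K z_b z_e`:
the foot of the perpendicular from `z_K` makes a right triangle with hypotenuse `z_K z_b`. Hence
`ρ ≤ σ ρ sin ∠ z_K z_b z_e`. For the angle itself, `arcsin` inverts `sin` on `[0, π/2]`, and an
angle of at least `π/2` exceeds every value of `arcsin`.
-/

namespace InnerProductGeometry

variable {V : Type*} [NormedAddCommGroup V] [InnerProductSpace ℝ V]

theorem sin_angle_smul_right_of_ne_zero (x y : V) {r : ℝ} (hr : r ≠ 0) :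
    Real.sin (angle x (r • y)) = Real.sin (angle x y) := by
  rcases hr.lt_or_gt with hneg | hpos
  · rw [angle_smul_right_of_neg x y hneg, angle_neg_right, Real.sin_pi_sub]
  · rw [angle_smul_right_of_pos x y hpos]

end InnerProductGeometry

namespace EuclideanGeometry

variable {V P : Type*} [NormedAddCommGroup V] [InnerProductSpace ℝ V] [MetricSpace P]
  [NormedAddTorsor V P]

theorem infDist_affineSpan_pair_eq_dist_mul_sin_angle (a b c : P) :
    infDist a (line[ℝ, b, c] : Set P) = dist a b * Real.sin (∠ a b c) := by
  set s := line[ℝ, b, c]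
  have hb : b ∈ s := left_mem_affineSpan_pair ℝ b c
  have hc : c ∈ s := right_mem_affineSpan_pair ℝ b c
  have : Nonempty s := ⟨⟨b, hb⟩⟩
  set p : P := ↑(orthogonalProjection s a)
  have hp : p ∈ s := orthogonalProjection_mem a
  have hperp : ∀ v ∈ s.direction, inner ℝ (a -ᵥ p) v = 0 := fun v hv => by
    rw [real_inner_comm]
    exact vsub_orthogonalProjection_mem_direction_orthogonal s a v hv
  have hright : ∠ a p b = π / 2 :=
    (InnerProductGeometry.inner_eq_zero_iff_angle_eq_pi_div_two _ _).mp
      (hperp _ (AffineSubspace.vsub_mem_direction hb hp))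
  obtain ⟨t, ht⟩ : ∃ t : ℝ, t • (c -ᵥ b) = p -ᵥ b := by
    rw [← Submodule.mem_span_singleton, ← vectorSpan_pair_rev, ← direction_affineSpan]
    exact AffineSubspace.vsub_mem_direction hp hb
  rw [← dist_orthogonalProjection_eq_infDist,
    ← sin_angle_mul_dist_of_angle_eq_pi_div_two hright, mul_comm, angle_comm]
  congr 1
  rcases eq_or_ne t 0 with rfl | ht0
  -- the foot is `b`, and both angles are right (`∠ a b b` through the zero vector)
  · have hpb : p = b := by rwa [zero_smul, eq_comm, vsub_eq_zero_iff_eq] at ht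
    have hab : inner ℝ (a -ᵥ b) (c -ᵥ b) = 0 := by
      simpa [hpb] using hperp _ (AffineSubspace.vsub_mem_direction hc hb)
    rw [hpb, angle_self_right, angle,
      (InnerProductGeometry.inner_eq_zero_iff_angle_eq_pi_div_two _ _).mp hab]
  · rw [angle, angle, ← ht, InnerProductGeometry.sin_angle_smul_right_of_ne_zero _ _ ht0]

end EuclideanGeometry

theorem Real.arcsin_le_of_le_sin {x θ : ℝ} (h₀ : 0 ≤ θ) (h : x ≤ Real.sin θ) :
    Real.arcsin x ≤ θ := by
  rcases le_or_gt (π / 2) θ with hθ | hθ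
  · exact (Real.arcsin_le_pi_div_two x).trans hθ
  · calc Real.arcsin x ≤ Real.arcsin (Real.sin θ) := Real.arcsin_le_arcsin h
      _ = θ := Real.arcsin_sin (by linarith [Real.pi_pos]) hθ.le

theorem angle_adjacent_to_edge_lower_bound_general
    (σ ρ : ℝ) (hσ : 1 ≤ σ) (hρ : 0 < ρ)
    (zb ze zK : EuclideanSpace ℝ (Fin 2))
    (hdist : ρ ≤ Metric.infDist zK (affineSpan ℝ {zb, ze} : Set (EuclideanSpace ℝ (Fin 2))))
    (hK : dist zb zK ≤ σ * ρ) :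
    1 / σ ≤ Real.sin (∠ zK zb ze) ∧ Real.arcsin (1 / σ) ≤ ∠ zK zb ze := by
  have hσ₀ : 0 < σ := one_pos.trans_le hσ
  have hsin : 1 / σ ≤ Real.sin (∠ zK zb ze) := by
    have hρσ : ρ ≤ σ * ρ * Real.sin (∠ zK zb ze) :=
      calc ρ ≤ dist zK zb * Real.sin (∠ zK zb ze) := by
            rwa [← infDist_affineSpan_pair_eq_dist_mul_sin_angle]
        _ ≤ σ * ρ * Real.sin (∠ zK zb ze) := by
            gcongr
            · exact InnerProductGeometry.sin_angle_nonneg _ _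
            · rwa [dist_comm]
    rw [div_le_iff₀ hσ₀]
    nlinarith
  exact ⟨hsin, Real.arcsin_le_of_le_sin (angle_nonneg _ _ _) hsin⟩

/-- Angles of the auxiliary triangle adjacent to the edge are bounded below by
`arcsin (1/σ)`. -/
theorem angle_adjacent_to_edge_lower_bound
    (σ ρ : ℝ) (hσ : 1 ≤ σ) (hρ : 0 < ρ)
    (zb ze zK : EuclideanSpace ℝ (Fin 2)) (hne : zb ≠ ze)
    (hdist : ρ ≤ Metric.infDist zK (affineSpan ℝ {zb, ze} : Set (EuclideanSpace ℝ (Fin 2))))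
    (hK : dist zb zK ≤ σ * ρ) :
    1 / σ ≤ Real.sin (∠ zK zb ze) ∧ Real.arcsin (1 / σ) ≤ ∠ zK zb ze :=
  angle_adjacent_to_edge_lower_bound_general σ ρ hσ hρ zb ze zK hdist hK
end

section
/- Let α ∈ (0, π/3]. There exists a constant c > 0, depending only on α, with the following property: for every h > 0, letting T ⊆ ℝ² be the isosceles triangle conv{(0,0), (h,0), (h/2, (h/2)·tan α)}, and for every continuously differentiable function v : ℝ² → ℝ, one has (∫₀ʰ v(x,0)² dx)^{1/2} ≤ c · ( h^{-1/2} · (∫_T v² )^{1/2} + h^{1/2} · (∫_T ‖∇v‖²)^{1/2} ), where the integrals over T are with respect to two-dimensional Lebesgue measure and ∇v is the gradient of v. -/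
/-!
Every point `(x, 0)` of the base is the foot of a segment of length `h / 4` inside `T`, running
parallel to the leg through the nearer base vertex, i.e. in the direction `(± cos α, sin α)`.
Along such a segment the fundamental theorem of calculus and `2 |g g'| ≤ g² / h + h g'²` give
`v (x, 0)² ≤ ∫₀^{h/4} (5 / h · v² + h |∇v|²)`. Integrating in `x` over either half of the base,
the segments sweep out a parallelogram inside `T`, parametrized by a shear of Jacobian `sin α`;
hence `∫₀ʰ v(x, 0)² ≤ 10 / sin α · (h⁻¹ ‖v‖²_T + h |v|²_{1,T})`.
-/

open Metric MeasureTheory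

/-- A point of the Euclidean plane with given coordinates. -/
def planePt (a b : ℝ) : EuclideanSpace ℝ (Fin 2) := WithLp.toLp 2 ![a, b]

open Set

theorem sq_le_integral_of_hasDerivAt {g g' : ℝ → ℝ} (hg : ∀ s, HasDerivAt g (g' s) s)
    (hg' : Continuous g') {ℓ h : ℝ} (hℓ : 0 < ℓ) (hh : 0 < h) :
    g 0 ^ 2 ≤ ∫ s in 0..ℓ, ((ℓ⁻¹ + h⁻¹) * g s ^ 2 + h * g' s ^ 2) := by
  have hgc : Continuous g := continuous_iff_continuousAt.2 fun s => (hg s).continuousAt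
  set Q : ℝ → ℝ := fun s => h⁻¹ * g s ^ 2 + h * g' s ^ 2 with hQdef
  have hQc : Continuous Q := by fun_prop
  have hQ : ∀ s, -(2 * g s * g' s) ≤ Q s := fun s => by
    have hsq : Q s - -(2 * g s * g' s) = h⁻¹ * (g s + h * g' s) ^ 2 := by
      simp only [hQdef]; field_simp; ring
    linarith [show 0 ≤ h⁻¹ * (g s + h * g' s) ^ 2 by positivity]
  have hpt : ∀ s ∈ Icc 0 ℓ, g 0 ^ 2 ≤ g s ^ 2 + ∫ t in 0..ℓ, Q t := by
    intro s hs
    have hftc : ∫ t in 0..s, 2 * g t * g' t = g s ^ 2 - g 0 ^ 2 :=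
      intervalIntegral.integral_eq_sub_of_hasDerivAt (fun t _ => by simpa using (hg t).pow 2)
        ((by fun_prop : Continuous fun t => 2 * g t * g' t).intervalIntegrable _ _)
    have hneg : ∫ t in 0..s, -(2 * g t * g' t) ≤ ∫ t in 0..s, Q t :=
      intervalIntegral.integral_mono_on hs.1
        ((by fun_prop : Continuous fun t => -(2 * g t * g' t)).intervalIntegrable _ _)
        (hQc.intervalIntegrable _ _) fun t _ => hQ t
    have hQmono : ∫ t in 0..s, Q t ≤ ∫ t in 0..ℓ, Q t :=
      intervalIntegral.integral_mono_interval le_rfl hs.1 hs.2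
        (ae_of_all _ fun t => by simp only [Pi.zero_apply, hQdef]; positivity)
        (hQc.intervalIntegrable _ _)
    rw [intervalIntegral.integral_neg, hftc] at hneg
    linarith
  set I := ∫ t in 0..ℓ, Q t
  have hmean : g 0 ^ 2 - I ≤ ∫ s in 0..ℓ, ℓ⁻¹ * g s ^ 2 :=
    calc g 0 ^ 2 - I = ∫ _ in 0..ℓ, ℓ⁻¹ * (g 0 ^ 2 - I) := by
          rw [intervalIntegral.integral_const, smul_eq_mul, sub_zero, ← mul_assoc,
            mul_inv_cancel₀ hℓ.ne', one_mul]
      _ ≤ ∫ s in 0..ℓ, ℓ⁻¹ * g s ^ 2 :=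
          intervalIntegral.integral_mono_on hℓ.le intervalIntegrable_const
            ((by fun_prop : Continuous fun s => ℓ⁻¹ * g s ^ 2).intervalIntegrable _ _)
            fun s hs => mul_le_mul_of_nonneg_left (by linarith [hpt s hs]) (by positivity)
  calc g 0 ^ 2 ≤ (∫ s in 0..ℓ, ℓ⁻¹ * g s ^ 2) + I := by linarith
    _ = ∫ s in 0..ℓ, (ℓ⁻¹ * g s ^ 2 + Q s) :=
        (intervalIntegral.integral_add
          ((by fun_prop : Continuous fun s => ℓ⁻¹ * g s ^ 2).intervalIntegrable _ _)
          (hQc.intervalIntegrable _ _)).symm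
    _ = _ := intervalIntegral.integral_congr fun s _ => by simp only [hQdef]; ring

theorem sq_le_integral_along_segment {E : Type*} [NormedAddCommGroup E] [NormedSpace ℝ E]
    {v : E → ℝ} (hv : ContDiff ℝ 1 v) (p : E) {d : E} (hd : ‖d‖ ≤ 1) {ℓ h : ℝ} (hℓ : 0 < ℓ)
    (hh : 0 < h) :
    v p ^ 2 ≤ ∫ s in 0..ℓ,
      ((ℓ⁻¹ + h⁻¹) * v (p + s • d) ^ 2 + h * ‖fderiv ℝ v (p + s • d)‖ ^ 2) := by
  have hDv : Continuous (fderiv ℝ v) := hv.continuous_fderiv one_ne_zero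
  have hderiv : ∀ s : ℝ,
      HasDerivAt (fun t : ℝ => v (p + t • d)) (fderiv ℝ v (p + s • d) d) s :=
    fun s => (hv.differentiable one_ne_zero _).hasFDerivAt.comp_hasDerivAt s
      (by simpa using ((hasDerivAt_id s).smul_const d).const_add p)
  have hslope : ∀ s : ℝ, |fderiv ℝ v (p + s • d) d| ≤ ‖fderiv ℝ v (p + s • d)‖ := fun s =>
    calc |fderiv ℝ v (p + s • d) d| ≤ ‖fderiv ℝ v (p + s • d)‖ * ‖d‖ :=
          (fderiv ℝ v _).le_opNorm d
      _ ≤ ‖fderiv ℝ v (p + s • d)‖ := mul_le_of_le_one_right (norm_nonneg _) hd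
  calc v p ^ 2
      ≤ ∫ s in 0..ℓ,
          ((ℓ⁻¹ + h⁻¹) * v (p + s • d) ^ 2 + h * fderiv ℝ v (p + s • d) d ^ 2) := by
        simpa using sq_le_integral_of_hasDerivAt hderiv (by fun_prop) hℓ hh
    _ ≤ _ := by
        refine intervalIntegral.integral_mono_on hℓ.le
          (Continuous.intervalIntegrable (by fun_prop) _ _)
          (Continuous.intervalIntegrable (by fun_prop) _ _) fun s _ => ?_
        have hsq := sq_le_sq.2 ((hslope s).trans (le_abs_self _))
        gcongr

@[fun_prop]
theorem Continuous.planePt {X : Type*} [TopologicalSpace X] {f g : X → ℝ} (hf : Continuous f)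
    (hg : Continuous g) : Continuous fun x => planePt (f x) (g x) := by
  unfold _root_.planePt
  fun_prop

theorem norm_planePt (a b : ℝ) : ‖planePt a b‖ = √(a ^ 2 + b ^ 2) := by
  simp [EuclideanSpace.norm_eq, planePt, Fin.sum_univ_two]

theorem planePt_add_smul (x y s a b : ℝ) :
    planePt x y + s • planePt a b = planePt (x + a * s) (y + b * s) := by
  ext i
  fin_cases i <;> simp [planePt, mul_comm]

noncomputable def planeEquiv : ℝ × ℝ ≃ᵐ EuclideanSpace ℝ (Fin 2) :=
  MeasurableEquiv.finTwoArrow.symm.trans (MeasurableEquiv.toLp 2 (Fin 2 → ℝ))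

theorem planeEquiv_apply (z : ℝ × ℝ) : planeEquiv z = planePt z.1 z.2 := by
  simp [planeEquiv, planePt, MeasurableEquiv.finTwoArrow]

theorem measurePreserving_planeEquiv : MeasurePreserving planeEquiv :=
  (EuclideanSpace.volume_preserving_symm_measurableEquiv_toLp (Fin 2)).symm.comp
    (volume_preserving_finTwoArrow ℝ).symm

theorem continuous_planeEquiv : Continuous planeEquiv := by
  rw [show ⇑planeEquiv = fun z => planePt z.1 z.2 from funext planeEquiv_apply]
  fun_prop

noncomputable def shear (c σ : ℝ) : ℝ × ℝ →L[ℝ] ℝ × ℝ :=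
  (ContinuousLinearMap.fst ℝ ℝ ℝ + c • ContinuousLinearMap.snd ℝ ℝ ℝ).prod
    (σ • ContinuousLinearMap.snd ℝ ℝ ℝ)

@[simp]
theorem shear_apply (c σ : ℝ) (z : ℝ × ℝ) : shear c σ z = (z.1 + c * z.2, σ * z.2) := rfl

theorem det_shear (c σ : ℝ) : (shear c σ).det = σ := by
  rw [ContinuousLinearMap.det, ← LinearMap.det_toMatrix (Module.Basis.finTwoProd ℝ)]
  have : LinearMap.toMatrix (Module.Basis.finTwoProd ℝ) (Module.Basis.finTwoProd ℝ)
      (shear c σ : ℝ × ℝ →ₗ[ℝ] ℝ × ℝ) = !![1, c; 0, σ] := by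
    ext i j
    fin_cases i <;> fin_cases j <;> simp [LinearMap.toMatrix_apply]
  rw [this, Matrix.det_fin_two_of]
  ring

theorem shear_injective {σ : ℝ} (c : ℝ) (hσ : σ ≠ 0) : Function.Injective (shear c σ) := by
  intro z w hzw
  simp only [shear_apply, Prod.ext_iff] at hzw
  have h2 : z.2 = w.2 := mul_left_cancel₀ hσ hzw.2
  exact Prod.ext (by rw [h2] at hzw; linarith [hzw.1]) h2

theorem setIntegral_image_shear {F : Type*} [NormedAddCommGroup F] [NormedSpace ℝ F] {σ : ℝ}
    (c : ℝ) (hσ : σ ≠ 0) {s : Set (ℝ × ℝ)} (hs : MeasurableSet s) (g : ℝ × ℝ → F) :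
    ∫ z in shear c σ '' s, g z = |σ| • ∫ z in s, g (shear c σ z) := by
  rw [integral_image_eq_integral_abs_det_fderiv_smul volume hs
    (fun z _ => (shear c σ).hasFDerivAt.hasFDerivWithinAt) (shear_injective c hσ).injOn g]
  simp only [det_shear, integral_smul]

theorem intervalIntegral_integral_sheared_le {F : EuclideanSpace ℝ (Fin 2) → ℝ}
    (hF : Continuous F) (hF0 : ∀ p, 0 ≤ F p) {T : Set (EuclideanSpace ℝ (Fin 2))}
    (hT : IntegrableOn F T) {a b c σ ℓ : ℝ} (hab : a ≤ b) (hℓ : 0 ≤ ℓ) (hσ : 0 < σ)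
    (hsub : ∀ x ∈ Icc a b, ∀ s ∈ Icc 0 ℓ, planePt (x + c * s) (σ * s) ∈ T) :
    ∫ x in a..b, ∫ s in 0..ℓ, F (planePt (x + c * s) (σ * s)) ≤ σ⁻¹ * ∫ p in T, F p := by
  set R : Set (ℝ × ℝ) := Ioc a b ×ˢ Ioc 0 ℓ
  have hfubini : ∫ x in a..b, ∫ s in 0..ℓ, F (planePt (x + c * s) (σ * s))
      = ∫ z in R, F (planeEquiv (shear c σ z)) := by
    rw [Measure.volume_eq_prod, setIntegral_prod, intervalIntegral.integral_of_le hab]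
    · refine setIntegral_congr_fun measurableSet_Ioc fun x _ => ?_
      simp [intervalIntegral.integral_of_le hℓ, planeEquiv_apply]
    · rw [← Measure.volume_eq_prod]
      exact (hF.comp (continuous_planeEquiv.comp (shear c σ).continuous)).continuousOn
        |>.integrableOn_compact (isCompact_Icc.prod isCompact_Icc)
        |>.mono_set (prod_mono Ioc_subset_Icc_self Ioc_subset_Icc_self)
  have himage : shear c σ '' R ⊆ planeEquiv ⁻¹' T := by
    rintro _ ⟨z, hz, rfl⟩
    simpa [planeEquiv_apply] using
      hsub z.1 (Ioc_subset_Icc_self hz.1) z.2 (Ioc_subset_Icc_self hz.2)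
  have hmono : ∫ z in shear c σ '' R, F (planeEquiv z)
      ≤ ∫ z in planeEquiv ⁻¹' T, F (planeEquiv z) :=
    setIntegral_mono_set
      ((measurePreserving_planeEquiv.integrableOn_comp_preimage
        planeEquiv.measurableEmbedding).2 hT)
      (ae_of_all _ fun z => hF0 _) himage.eventuallyLE
  rw [setIntegral_image_shear c hσ.ne' (measurableSet_Ioc.prod measurableSet_Ioc),
    abs_of_pos hσ, smul_eq_mul, measurePreserving_planeEquiv.setIntegral_preimage_emb
      planeEquiv.measurableEmbedding] at hmono
  rw [hfubini, le_inv_mul_iff₀ hσ]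
  exact hmono

theorem intervalIntegral_sq_le_of_segments_subset {v : EuclideanSpace ℝ (Fin 2) → ℝ}
    (hv : ContDiff ℝ 1 v) {T : Set (EuclideanSpace ℝ (Fin 2))} (hT : IsCompact T)
    {a b c σ ℓ h : ℝ} (hab : a ≤ b) (hℓ : 0 < ℓ) (hh : 0 < h) (hσ : 0 < σ)
    (hcσ : c ^ 2 + σ ^ 2 ≤ 1)
    (hsub : ∀ x ∈ Icc a b, ∀ s ∈ Icc 0 ℓ, planePt (x + c * s) (σ * s) ∈ T) :
    ∫ x in a..b, v (planePt x 0) ^ 2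
      ≤ σ⁻¹ * ∫ p in T, ((ℓ⁻¹ + h⁻¹) * v p ^ 2 + h * ‖fderiv ℝ v p‖ ^ 2) := by
  set F : EuclideanSpace ℝ (Fin 2) → ℝ :=
    fun p => (ℓ⁻¹ + h⁻¹) * v p ^ 2 + h * ‖fderiv ℝ v p‖ ^ 2
  have hF : Continuous F := by
    have hDv := hv.continuous_fderiv one_ne_zero
    have hvc := hv.continuous
    fun_prop
  have hd : ‖planePt c σ‖ ≤ 1 := by
    rw [norm_planePt]
    exact Real.sqrt_le_one.2 hcσ
  calc ∫ x in a..b, v (planePt x 0) ^ 2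
      ≤ ∫ x in a..b, ∫ s in 0..ℓ, F (planePt (x + c * s) (σ * s)) := by
        refine intervalIntegral.integral_mono_on hab
          (Continuous.intervalIntegrable (by fun_prop) _ _)
          (Continuous.intervalIntegrable ?_ _ _) fun x _ => ?_
        · exact intervalIntegral.continuous_parametric_intervalIntegral_of_continuous'
            (by fun_prop) _ _
        · simpa [planePt_add_smul] using
            sq_le_integral_along_segment hv (planePt x 0) hd hℓ hh
    _ ≤ σ⁻¹ * ∫ p in T, F p :=
        intervalIntegral_integral_sheared_le hF
          (fun p => by positivity) (hF.continuousOn.integrableOn_compact hT) hab hℓ.le hσ hsub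

def isoscelesTriangle (h slope : ℝ) : Set (EuclideanSpace ℝ (Fin 2)) :=
  convexHull ℝ {planePt 0 0, planePt h 0, planePt (h / 2) ((h / 2) * slope)}

theorem isCompact_isoscelesTriangle (h slope : ℝ) : IsCompact (isoscelesTriangle h slope) :=
  (toFinite _).isCompact_convexHull (𝕜 := ℝ)

theorem planePt_mem_isoscelesTriangle {h t u y : ℝ} (hh : 0 < h) (ht : 0 < t) (hy : 0 ≤ y)
    (hyu : y ≤ t * u) (hyu' : y ≤ t * (h - u)) : planePt u y ∈ isoscelesTriangle h t := by
  set w : Fin 3 → ℝ := ![(h - u - y / t) / h, (u - y / t) / h, 2 * y / (h * t)]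
  set z : Fin 3 → EuclideanSpace ℝ (Fin 2) :=
    ![planePt 0 0, planePt h 0, planePt (h / 2) ((h / 2) * t)]
  have hyt : y / t ≤ u ∧ y / t ≤ h - u := by
    constructor <;> rw [div_le_iff₀ ht] <;> linarith
  have hw : ∀ i ∈ Finset.univ, 0 ≤ w i := by
    intro i _
    fin_cases i
    exacts [div_nonneg (by linarith) hh.le, div_nonneg (by linarith) hh.le,
      div_nonneg (by positivity) (by positivity)]
  have hw1 : ∑ i, w i = 1 := by
    simp only [w, Fin.sum_univ_three, Matrix.cons_val_zero, Matrix.cons_val_one, Matrix.cons_val]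
    field_simp
    ring
  have hsum : ∑ i, w i • z i = planePt u y := by
    simp only [w, z, Fin.sum_univ_three]
    ext i
    fin_cases i <;>
      simp only [planePt, Fin.isValue, Fin.zero_eta, Fin.mk_one, Matrix.cons_val_zero,
        Matrix.cons_val_one, Matrix.cons_val, Matrix.cons_val_fin_one, PiLp.add_apply,
        PiLp.smul_apply, smul_eq_mul] <;>
      field_simp <;> ring
  rw [← hsum]
  refine (convex_convexHull ℝ _).sum_mem hw hw1 fun i _ => subset_convexHull ℝ _ ?_
  fin_cases i <;> simp [z]

theorem planePt_mem_isoscelesTriangle_of_left {h t c x s : ℝ} (hh : 0 < h) (ht : 0 < t)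
    (hc0 : 0 ≤ c) (hc1 : c ≤ 1) (hx : x ∈ Icc 0 (h / 2)) (hs : s ∈ Icc 0 (h / 4)) :
    planePt (x + c * s) (t * c * s) ∈ isoscelesTriangle h t := by
  obtain ⟨hx0, hx1⟩ := hx
  obtain ⟨hs0, hs1⟩ := hs
  apply planePt_mem_isoscelesTriangle hh ht (by positivity) (by nlinarith)
  nlinarith [mul_le_mul hc1 hs1 hs0 zero_le_one]

theorem planePt_mem_isoscelesTriangle_of_right {h t c x s : ℝ} (hh : 0 < h) (ht : 0 < t)
    (hc0 : 0 ≤ c) (hc1 : c ≤ 1) (hx : x ∈ Icc (h / 2) h) (hs : s ∈ Icc 0 (h / 4)) :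
    planePt (x + -c * s) (t * c * s) ∈ isoscelesTriangle h t := by
  obtain ⟨hx0, hx1⟩ := hx
  obtain ⟨hs0, hs1⟩ := hs
  apply planePt_mem_isoscelesTriangle hh ht (by positivity) _ (by nlinarith)
  nlinarith [mul_le_mul hc1 hs1 hs0 zero_le_one]

theorem sqrt_le_sqrt_mul_rpow_add_of_le {I A X Y h : ℝ} (hA : 0 ≤ A) (hh : 0 < h) (hX : 0 ≤ X)
    (hY : 0 ≤ Y) (hI : I ≤ A * (X / h + h * Y)) :
    √I ≤ √A * (h ^ (-(1 / 2 : ℝ)) * √X + h ^ (1 / 2 : ℝ) * √Y) := by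
  rw [Real.rpow_neg hh.le, ← Real.sqrt_eq_rpow]
  refine Real.sqrt_le_iff.2 ⟨by positivity, hI.trans ?_⟩
  have hsh : 0 < √h := Real.sqrt_pos.2 hh
  rw [mul_pow, Real.sq_sqrt hA, add_sq, mul_pow, mul_pow, inv_pow, Real.sq_sqrt hh.le,
    Real.sq_sqrt hX, Real.sq_sqrt hY]
  gcongr
  field_simp
  nlinarith [mul_nonneg (Real.sqrt_nonneg X) (Real.sqrt_nonneg Y)]

theorem integral_sq_trace_le_isoscelesTriangle {α h : ℝ} (hα0 : 0 < α)
    (hαπ : α < Real.pi / 2) (hh : 0 < h) {v : EuclideanSpace ℝ (Fin 2) → ℝ}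
    (hv : ContDiff ℝ 1 v) :
    ∫ x in (0 : ℝ)..h, v (planePt x 0) ^ 2
      ≤ 10 / Real.sin α * ((∫ p in isoscelesTriangle h (Real.tan α), v p ^ 2) / h
          + h * ∫ p in isoscelesTriangle h (Real.tan α), ‖fderiv ℝ v p‖ ^ 2) := by
  have hcos : 0 < Real.cos α := Real.cos_pos_of_mem_Ioo ⟨by linarith, hαπ⟩
  have hsin : 0 < Real.sin α := Real.sin_pos_of_pos_of_lt_pi hα0 (by linarith [Real.pi_pos])
  have htan : 0 < Real.tan α := Real.tan_pos_of_pos_of_lt_pi_div_two hα0 hαπ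
  set T := isoscelesTriangle h (Real.tan α)
  have hT : IsCompact T := isCompact_isoscelesTriangle h (Real.tan α)
  have hquarter : (h / 4)⁻¹ + h⁻¹ = 5 / h := by field_simp; norm_num
  have hcσ : Real.cos α ^ 2 + Real.sin α ^ 2 ≤ 1 := (Real.cos_sq_add_sin_sq α).le
  have htan_mul_cos : Real.tan α * Real.cos α = Real.sin α := Real.tan_mul_cos hcos.ne'
  have hleft := intervalIntegral_sq_le_of_segments_subset hv hT (a := 0) (b := h / 2)
    (ℓ := h / 4) (by positivity) (by positivity) hh hsin hcσ fun x hx s hs => by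
      rw [← htan_mul_cos]
      exact planePt_mem_isoscelesTriangle_of_left hh htan hcos.le (Real.cos_le_one α) hx hs
  have hright := intervalIntegral_sq_le_of_segments_subset hv hT (a := h / 2) (b := h)
    (ℓ := h / 4) (by linarith) (by positivity) hh hsin (by rwa [neg_sq]) fun x hx s hs => by
      rw [← htan_mul_cos]
      exact planePt_mem_isoscelesTriangle_of_right hh htan hcos.le (Real.cos_le_one α) hx hs
  rw [hquarter] at hleft hright
  have hv2 : IntegrableOn (fun p => v p ^ 2) T :=
    (hv.continuous.pow 2).continuousOn.integrableOn_compact hT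
  have hDv2 : IntegrableOn (fun p => ‖fderiv ℝ v p‖ ^ 2) T :=
    ((hv.continuous_fderiv one_ne_zero).norm.pow 2).continuousOn.integrableOn_compact hT
  rw [integral_add (hv2.const_mul _) (hDv2.const_mul _), integral_const_mul,
    integral_const_mul] at hleft hright
  have hY : 0 ≤ h * ∫ p in T, ‖fderiv ℝ v p‖ ^ 2 :=
    mul_nonneg hh.le (integral_nonneg fun _ => sq_nonneg _)
  rw [← intervalIntegral.integral_add_adjacent_intervals (b := h / 2)
    (Continuous.intervalIntegrable (by fun_prop) _ _)
    (Continuous.intervalIntegrable (by fun_prop) _ _)]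
  calc _ ≤ _ := add_le_add hleft hright
    _ = (Real.sin α)⁻¹ * (10 / h * (∫ p in T, v p ^ 2)
          + 2 * (h * ∫ p in T, ‖fderiv ℝ v p‖ ^ 2)) := by ring
    _ ≤ (Real.sin α)⁻¹ * (10 / h * (∫ p in T, v p ^ 2)
          + 10 * (h * ∫ p in T, ‖fderiv ℝ v p‖ ^ 2)) := by gcongr; norm_num
    _ = _ := by ring

/-- Scaled trace inequality on the isosceles triangle with base `[(0,0),(h,0)]` and base
angles `α`: the `L₂`-norm of the trace on the base is controlled by
`c (h^{-1/2} ‖v‖_{0,T} + h^{1/2} |v|_{1,T})`. -/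
theorem trace_inequality_isosceles_triangle
    (α : ℝ) (hα0 : 0 < α) (hα : α ≤ Real.pi / 3) :
    ∃ c : ℝ, 0 < c ∧ ∀ h : ℝ, 0 < h →
      ∀ v : EuclideanSpace ℝ (Fin 2) → ℝ, ContDiff ℝ 1 v →
        Real.sqrt (∫ x in (0 : ℝ)..h, v (planePt x 0) ^ 2) ≤
          c * (h ^ (-(1 / 2 : ℝ)) *
                Real.sqrt (∫ x in
                  convexHull ℝ ({planePt 0 0, planePt h 0,
                    planePt (h / 2) ((h / 2) * Real.tan α)} :
                      Set (EuclideanSpace ℝ (Fin 2))), v x ^ 2) +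
              h ^ ((1 / 2 : ℝ)) *
                Real.sqrt (∫ x in
                  convexHull ℝ ({planePt 0 0, planePt h 0,
                    planePt (h / 2) ((h / 2) * Real.tan α)} :
                      Set (EuclideanSpace ℝ (Fin 2))), ‖fderiv ℝ v x‖ ^ 2)) := by
  have hαπ : α < Real.pi / 2 := by linarith [Real.pi_pos]
  have hsin : 0 < Real.sin α := Real.sin_pos_of_pos_of_lt_pi hα0 (by linarith)
  refine ⟨√(10 / Real.sin α), by positivity, fun h hh v hv => ?_⟩
  exact sqrt_le_sqrt_mul_rpow_add_of_le (by positivity) hh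
    (integral_nonneg fun _ => sq_nonneg _) (integral_nonneg fun _ => sq_nonneg _)
    (integral_sq_trace_le_isoscelesTriangle hα0 hαπ hh hv)
end

section
/- Let T ⊆ ℝ² be the reference triangle conv{(0,0), (1,0), (0,1)} and let b(x,y) = x·y·(1 − x − y) be the (cubic) bubble function on T, which is positive in the interior of T and vanishes on ∂T. For every k ∈ ℕ there exists a constant c > 0 such that for every polynomial p in two variables of total degree at most k, ∫_T p(x,y)² dx dy ≤ c · ∫_T b(x,y)·p(x,y)² dx dy. -/
/-!
Expand `p` in a basis of the finite-dimensional space of polynomials of degree at most `k`.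
Both integrals are then continuous functions of the coefficient vector, homogeneous of
degree two, and the bubble-weighted one is positive away from `0`: a nonzero polynomial
cannot vanish on the open set where the bubble is positive. Comparing the maximum of the
first with the minimum of the second on the (compact) unit sphere gives the constant.
-/

open Metric MeasureTheory MvPolynomial

section Homogeneous

variable {E : Type*} [NormedAddCommGroup E] [NormedSpace ℝ E] {Q Q₁ Q₂ : E → ℝ}

theorem map_zero_of_homogeneous (hQ : ∀ (a : ℝ) v, Q (a • v) = a ^ 2 * Q v) : Q 0 = 0 := by
  simpa using hQ 0 0

theorem eq_norm_sq_mul_of_homogeneous (hQ : ∀ (a : ℝ) v, Q (a • v) = a ^ 2 * Q v) (v : E) :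
    Q v = ‖v‖ ^ 2 * Q (‖v‖⁻¹ • v) := by
  rcases eq_or_ne v 0 with rfl | hv
  · simp [map_zero_of_homogeneous hQ]
  · rw [hQ, ← mul_assoc, ← mul_pow, mul_inv_cancel₀ (norm_ne_zero_iff.2 hv), one_pow, one_mul]

variable [ProperSpace E]

theorem exists_le_mul_norm_sq_of_homogeneous (hc : Continuous Q)
    (hQ : ∀ (a : ℝ) v, Q (a • v) = a ^ 2 * Q v) : ∃ C, ∀ v, Q v ≤ C * ‖v‖ ^ 2 := by
  obtain ⟨C, hC⟩ := (isCompact_sphere (0 : E) 1).bddAbove_image hc.continuousOn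
  refine ⟨C, fun v => ?_⟩
  rcases eq_or_ne v 0 with rfl | hv
  · simp [map_zero_of_homogeneous hQ]
  · rw [eq_norm_sq_mul_of_homogeneous hQ v, mul_comm C]
    exact mul_le_mul_of_nonneg_left
      (hC ⟨_, mem_sphere_zero_iff_norm.2 (norm_smul_inv_norm hv), rfl⟩) (by positivity)

theorem exists_pos_mul_norm_sq_le_of_homogeneous (hc : Continuous Q)
    (hQ : ∀ (a : ℝ) v, Q (a • v) = a ^ 2 * Q v) (hpos : ∀ v ≠ 0, 0 < Q v) :
    ∃ m > 0, ∀ v, m * ‖v‖ ^ 2 ≤ Q v := by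
  obtain ⟨m, hm, hmQ⟩ := (isCompact_sphere (0 : E) 1).exists_forall_le' hc.continuousOn
    fun u hu => hpos u (ne_of_mem_sphere hu one_ne_zero)
  refine ⟨m, hm, fun v => ?_⟩
  rcases eq_or_ne v 0 with rfl | hv
  · simp [map_zero_of_homogeneous hQ]
  · rw [eq_norm_sq_mul_of_homogeneous hQ v, mul_comm m]
    exact mul_le_mul_of_nonneg_left
      (hmQ _ (mem_sphere_zero_iff_norm.2 (norm_smul_inv_norm hv))) (by positivity)

theorem exists_pos_le_mul_of_homogeneous (hc₁ : Continuous Q₁) (hc₂ : Continuous Q₂)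
    (hQ₁ : ∀ (a : ℝ) v, Q₁ (a • v) = a ^ 2 * Q₁ v) (hQ₂ : ∀ (a : ℝ) v, Q₂ (a • v) = a ^ 2 * Q₂ v)
    (hpos : ∀ v ≠ 0, 0 < Q₂ v) : ∃ c > 0, ∀ v, Q₁ v ≤ c * Q₂ v := by
  obtain ⟨C, hC⟩ := exists_le_mul_norm_sq_of_homogeneous hc₁ hQ₁
  obtain ⟨m, hm, hmQ⟩ := exists_pos_mul_norm_sq_le_of_homogeneous hc₂ hQ₂ hpos
  refine ⟨max C 1 / m, by positivity, fun v => ?_⟩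
  calc Q₁ v ≤ C * ‖v‖ ^ 2 := hC v
    _ ≤ max C 1 * ‖v‖ ^ 2 := by gcongr; exact le_max_left C 1
    _ = max C 1 / m * (m * ‖v‖ ^ 2) := by field_simp
    _ ≤ max C 1 / m * Q₂ v := by gcongr; exact hmQ v

end Homogeneous

theorem setIntegral_pos_of_isOpen_subset {X : Type*} [TopologicalSpace X] [MeasurableSpace X]
    [OpensMeasurableSpace X] {μ : Measure X} [μ.IsOpenPosMeasure] {f : X → ℝ} {s U : Set X}
    {x : X} (hf : Continuous f) (hs : MeasurableSet s) (hfi : IntegrableOn f s μ)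
    (hf₀ : ∀ y ∈ s, 0 ≤ f y) (hU : IsOpen U) (hUs : U ⊆ s) (hxU : x ∈ U) (hx : f x ≠ 0) :
    0 < ∫ y in s, f y ∂μ := by
  rw [setIntegral_pos_iff_support_of_nonneg_ae (ae_restrict_of_forall_mem hs hf₀) hfi]
  exact ((hU.inter hf.isOpen_support).measure_pos μ ⟨x, hxU, hx⟩).trans_le
    (measure_mono fun y hy => ⟨hy.2, hUs hy.1⟩)

theorem continuous_eval_linearMap {ι σ : Type*} [Fintype ι]
    (L : (ι → ℝ) →ₗ[ℝ] MvPolynomial σ ℝ) :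
    Continuous fun q : (ι → ℝ) × (σ → ℝ) => eval q.2 (L q.1) := by
  classical
  have hL : (fun q : (ι → ℝ) × (σ → ℝ) => eval q.2 (L q.1)) =
      fun q => ∑ i, q.1 i * eval q.2 (L fun j => if i = j then 1 else 0) := by
    funext q
    rw [L.pi_apply_eq_sum_univ q.1, map_sum]
    simp only [smul_eval]
  rw [hL]
  exact continuous_finsetSum _ fun i _ =>
    ((continuous_apply i).comp continuous_fst).mul ((continuous_eval _).comp continuous_snd)

theorem exists_mem_pi_Ioo_eval_ne_zero {σ : Type*} {p : MvPolynomial σ ℝ} (hp : p ≠ 0) {a b : ℝ}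
    (hab : a < b) : ∃ y ∈ Set.univ.pi fun _ => Set.Ioo a b, eval y p ≠ 0 := by
  by_contra! h
  exact hp (funext_set _ (fun _ => Set.Ioo_infinite hab) (by simpa using h))

theorem continuous_setIntegral_mul_eval_sq {ι σ : Type*} [Fintype ι] [Fintype σ]
    {μ : Measure (EuclideanSpace ℝ σ)} [IsLocallyFiniteMeasure μ] {f : EuclideanSpace ℝ σ → ℝ}
    (L : (ι → ℝ) →ₗ[ℝ] MvPolynomial σ ℝ) {K : Set (EuclideanSpace ℝ σ)} (hK : IsCompact K)
    (hf : Continuous f) :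
    Continuous fun c => ∫ x in K, f x * (eval (fun i => x i) (L c)) ^ 2 ∂μ := by
  refine continuous_parametric_integral_of_continuous ?_ hK
  exact (hf.comp continuous_snd).mul (((continuous_eval_linearMap L).comp
    (continuous_fst.prodMk ((PiLp.continuous_ofLp 2 _).comp continuous_snd))).pow 2)

theorem setIntegral_mul_eval_sq_smul {M σ : Type*} [AddCommMonoid M] [Module ℝ M]
    {μ : Measure (EuclideanSpace ℝ σ)} {f : EuclideanSpace ℝ σ → ℝ}
    (L : M →ₗ[ℝ] MvPolynomial σ ℝ) (K : Set (EuclideanSpace ℝ σ)) (a : ℝ) (c : M) :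
    ∫ x in K, f x * (eval (fun i => x i) (L (a • c))) ^ 2 ∂μ =
      a ^ 2 * ∫ x in K, f x * (eval (fun i => x i) (L c)) ^ 2 ∂μ := by
  simp_rw [map_smul, smul_eval, mul_pow, mul_left_comm (f _)]
  exact integral_const_mul _ _

def refTriangle : Set (EuclideanSpace ℝ (Fin 2)) :=
  convexHull ℝ {!₂[0, 0], !₂[1, 0], !₂[0, 1]}

def bubble (x : EuclideanSpace ℝ (Fin 2)) : ℝ := x 0 * x 1 * (1 - x 0 - x 1)

theorem isCompact_refTriangle : IsCompact refTriangle :=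
  (Set.toFinite _).isCompact_convexHull ℝ

theorem refTriangle_eq : refTriangle = {x | 0 ≤ x 0 ∧ 0 ≤ x 1 ∧ x 0 + x 1 ≤ 1} := by
  apply subset_antisymm
  · refine convexHull_min ?_ ?_
    · rintro x (rfl | rfl | rfl) <;> norm_num
    · intro x hx y hy a b ha hb hab
      simp only [Set.mem_ofPred_eq, PiLp.add_apply, PiLp.smul_apply, smul_eq_mul] at hx hy ⊢
      obtain ⟨hx0, hx1, hx2⟩ := hx
      obtain ⟨hy0, hy1, hy2⟩ := hy
      refine ⟨by positivity, by positivity, ?_⟩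
      nlinarith
  · rintro x ⟨h0, h1, h2⟩
    have hx : x = ∑ i, ![1 - x 0 - x 1, x 0, x 1] i • ![!₂[0, 0], !₂[1, 0], !₂[0, 1]] i := by
      ext j; fin_cases j <;> simp [Fin.sum_univ_three]
    rw [hx]
    refine (convex_convexHull ℝ _).sum_mem (fun i _ => ?_) (by simp [Fin.sum_univ_three]; ring)
      (fun i _ => subset_convexHull ℝ _ ?_)
    · fin_cases i <;> simp <;> linarith
    · fin_cases i <;> simp

theorem continuous_bubble : Continuous bubble := by
  unfold bubble; fun_prop

theorem setIntegral_bubble_mul_eval_sq_pos {p : MvPolynomial (Fin 2) ℝ} (hp : p ≠ 0) :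
    0 < ∫ x in refTriangle, bubble x * (eval (fun i => x i) p) ^ 2 := by
  obtain ⟨y, hy, hpy⟩ := exists_mem_pi_Ioo_eval_ne_zero hp (by norm_num : (0 : ℝ) < 1 / 2)
  have hcont : Continuous fun x : EuclideanSpace ℝ (Fin 2) => eval (fun i => x i) p :=
    (continuous_eval p).comp (PiLp.continuous_ofLp 2 _)
  have hU : IsOpen {x : EuclideanSpace ℝ (Fin 2) | 0 < x 0 ∧ 0 < x 1 ∧ x 0 + x 1 < 1} :=
    (isOpen_lt continuous_const (PiLp.continuous_apply 2 _ 0)).and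
      ((isOpen_lt continuous_const (PiLp.continuous_apply 2 _ 1)).and
        (isOpen_lt (by fun_prop) continuous_const))
  have hint : Continuous fun x => bubble x * (eval (fun i => x i) p) ^ 2 :=
    continuous_bubble.mul (hcont.pow 2)
  simp only [Set.mem_pi, Set.mem_univ, Set.mem_Ioo, forall_const, Fin.forall_fin_two] at hy
  refine setIntegral_pos_of_isOpen_subset (x := WithLp.toLp 2 y) hint
    isCompact_refTriangle.isClosed.measurableSet
    (hint.continuousOn.integrableOn_compact isCompact_refTriangle) ?_ hU ?_ ?_ ?_
  · rw [refTriangle_eq]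
    rintro x ⟨h0, h1, h2⟩
    exact mul_nonneg (mul_nonneg (mul_nonneg h0 h1) (by linarith)) (sq_nonneg _)
  · rw [refTriangle_eq]
    rintro x ⟨h0, h1, h2⟩
    exact ⟨h0.le, h1.le, h2.le⟩
  · simp only [Set.mem_ofPred_eq]
    exact ⟨hy.1.1, hy.2.1, by linarith⟩
  · exact mul_ne_zero (mul_pos (mul_pos hy.1.1 hy.2.1) (by linarith)).ne' (pow_ne_zero 2 hpy)

/-- On the reference triangle, the squared `L₂`-norm of a polynomial of degree at most `k`
is controlled by its bubble-weighted `L₂`-norm. -/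
theorem bubble_weighted_norm_equivalence
    (k : ℕ) :
    ∃ c : ℝ, 0 < c ∧
      ∀ p : MvPolynomial (Fin 2) ℝ, p.totalDegree ≤ k →
        (∫ x in convexHull ℝ
            ({!₂[0, 0], !₂[1, 0], !₂[0, 1]} : Set (EuclideanSpace ℝ (Fin 2))),
            (MvPolynomial.eval (fun i => x i) p) ^ 2) ≤
          c * ∫ x in convexHull ℝ
            ({!₂[0, 0], !₂[1, 0], !₂[0, 1]} : Set (EuclideanSpace ℝ (Fin 2))),
            (x 0 * x 1 * (1 - x 0 - x 1)) * (MvPolynomial.eval (fun i => x i) p) ^ 2 := by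
  let V := restrictTotalDegree (Fin 2) ℝ k
  let b := Module.finBasis ℝ V
  let L : (Fin (Module.finrank ℝ V) → ℝ) →ₗ[ℝ] MvPolynomial (Fin 2) ℝ :=
    V.subtype ∘ₗ b.equivFun.symm.toLinearMap
  have hL : Function.Injective L := Subtype.val_injective.comp b.equivFun.symm.injective
  obtain ⟨c, hc, hle⟩ := exists_pos_le_mul_of_homogeneous
    (continuous_setIntegral_mul_eval_sq (μ := volume) (f := 1) L isCompact_refTriangle
      continuous_const)
    (continuous_setIntegral_mul_eval_sq (μ := volume) L isCompact_refTriangle continuous_bubble)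
    (setIntegral_mul_eval_sq_smul L _) (setIntegral_mul_eval_sq_smul L _)
    fun v hv => setIntegral_bubble_mul_eval_sq_pos (by simpa using hL.ne hv)
  refine ⟨c, hc, fun p hp => ?_⟩
  obtain ⟨v, rfl⟩ : ∃ v, L v = p :=
    ⟨b.equivFun ⟨p, (mem_restrictTotalDegree _ _ _).2 hp⟩, by simp [L]⟩
  simpa only [Pi.one_apply, one_mul, refTriangle, bubble] using hle v
end
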